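/- arXiv:2604.15556 — 2 statements merged into one kernel-verified Lean document; each statement's English description precedes it below -/
import Mathlib

section
/- (Equivariance part of the AE-LPN Lemma.) Let n ≥ 1, let P = (1/n)·𝟏𝟏ᵀ be the orthogonal projection onto span{𝟏}, let h : ℝⁿ → ℝ be differentiable and positively homogeneous of degree two (h(a·x) = a²·h(x) for all a > 0), and define h̃(x) = h((I−P)x) + (1/2)·‖Px‖². Then ∇h̃ is scalar-affine equivariant: for every x ∈ ℝⁿ, every a > 0, and every c ∈ ℝ, ∇h̃(a·x + c·𝟏) = a·∇h̃(x) + c·𝟏. -/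
/-!
Write `Q = I - P`. Since `P` and `Q` are self-adjoint projections,
`∇h̃ x = Q (∇h (Q x)) + P x`. Degree-two homogeneity of `h` makes `∇h` homogeneous of degree
one, and `Q 𝟏 = 0`, `P 𝟏 = 𝟏`; so replacing `x` by `a • x + c • 𝟏` scales the first term by `a`
and turns the second into `a • P x + c • 𝟏`.
-/

/-- The all-ones vector in `ℝⁿ`. -/
noncomputable def onesVec (n : ℕ) : EuclideanSpace ℝ (Fin n) := WithLp.toLp 2 (fun _ => 1)

/-- `P x = ((1/n)·Σᵢ xᵢ)·𝟏`, the orthogonal projection onto `span{𝟏}`. -/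
noncomputable def meanProj (n : ℕ) (x : EuclideanSpace ℝ (Fin n)) :
    EuclideanSpace ℝ (Fin n) :=
  ((1 / (n : ℝ)) * ∑ i, x i) • onesVec n

open scoped InnerProductSpace

theorem smul_fderiv_smul_of_homogeneous {𝕜 E F : Type*} [NontriviallyNormedField 𝕜]
    [NormedAddCommGroup E] [NormedSpace 𝕜 E] [NormedAddCommGroup F] [NormedSpace 𝕜 F]
    {f : E → F} {a : 𝕜} {k : ℕ} (hhom : ∀ y, f (a • y) = a ^ k • f y) {x : E}
    (hfa : DifferentiableAt 𝕜 f (a • x)) (hfx : DifferentiableAt 𝕜 f x) :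
    a • fderiv 𝕜 f (a • x) = a ^ k • fderiv 𝕜 f x := by
  have hcomp : HasFDerivAt (fun y => f (a • y))
      ((fderiv 𝕜 f (a • x)).comp (a • ContinuousLinearMap.id 𝕜 E)) x :=
    hfa.hasFDerivAt.comp x ((hasFDerivAt_id x).const_smul a)
  simp only [hhom, ContinuousLinearMap.comp_smul, ContinuousLinearMap.comp_id] at hcomp
  exact hcomp.unique (hfx.hasFDerivAt.const_smul _)

theorem gradient_smul_of_homogeneous {E : Type*} [NormedAddCommGroup E] [InnerProductSpace ℝ E]
    [CompleteSpace E] {f : E → ℝ} {a : ℝ} (ha : a ≠ 0) (hhom : ∀ y, f (a • y) = a ^ 2 * f y)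
    (hf : Differentiable ℝ f) (x : E) :
    gradient f (a • x) = a • gradient f x := by
  have key := smul_fderiv_smul_of_homogeneous (k := 2) (by simpa using hhom) (hf (a • x)) (hf x)
  rw [pow_two, mul_smul] at key
  rw [gradient, gradient, smul_right_injective _ ha key, map_smul]

theorem HasGradientAt.comp_isSymmetric {𝕜 E : Type*} [RCLike 𝕜] [NormedAddCommGroup E]
    [InnerProductSpace 𝕜 E] [CompleteSpace E] {f : E → 𝕜} {g x : E} {A : E →L[𝕜] E}
    (hA : (A : E →ₗ[𝕜] E).IsSymmetric) (hf : HasGradientAt f g (A x)) :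
    HasGradientAt (f ∘ A) (A g) x := by
  rw [hasGradientAt_iff_hasFDerivAt] at hf ⊢
  refine (hf.comp x A.hasFDerivAt).congr_fderiv ?_
  ext v
  simpa [InnerProductSpace.toDual_apply_apply] using (hA g v).symm

theorem HasGradientAt.add {𝕜 E : Type*} [RCLike 𝕜] [NormedAddCommGroup E]
    [InnerProductSpace 𝕜 E] [CompleteSpace E] {f g : E → 𝕜} {f' g' x : E}
    (hf : HasGradientAt f f' x) (hg : HasGradientAt g g' x) :
    HasGradientAt (f + g) (f' + g') x := by
  rw [hasGradientAt_iff_hasFDerivAt] at hf hg ⊢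
  rw [map_add]
  exact hf.add hg

theorem hasGradientAt_half_norm_sq {E : Type*} [NormedAddCommGroup E] [InnerProductSpace ℝ E]
    [CompleteSpace E] (x : E) : HasGradientAt (fun y : E => 1 / 2 * ‖y‖ ^ 2) x x := by
  rw [hasGradientAt_iff_hasFDerivAt]
  refine ((hasStrictFDerivAt_norm_sq x).hasFDerivAt.const_mul (1 / 2 : ℝ)).congr_fderiv ?_
  ext v
  simp

namespace Submodule

variable {E : Type*} [NormedAddCommGroup E] [InnerProductSpace ℝ E] [CompleteSpace E]
  (K : Submodule ℝ E) [K.HasOrthogonalProjection]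

noncomputable def extendByHalfNormSq (f : E → ℝ) (x : E) : ℝ :=
  f (Kᗮ.starProjection x) + 1 / 2 * ‖K.starProjection x‖ ^ 2

variable {K}

theorem gradient_extendByHalfNormSq {f : E → ℝ} (hf : Differentiable ℝ f) (x : E) :
    gradient (K.extendByHalfNormSq f) x =
      Kᗮ.starProjection (gradient f (Kᗮ.starProjection x)) + K.starProjection x := by
  have hfK : HasGradientAt (f ∘ Kᗮ.starProjection) _ x :=
    (hf _).hasGradientAt.comp_isSymmetric Kᗮ.starProjection_isSymmetric
  have hnormK : HasGradientAt ((fun y : E => 1 / 2 * ‖y‖ ^ 2) ∘ K.starProjection) _ x :=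
    (hasGradientAt_half_norm_sq _).comp_isSymmetric K.starProjection_isSymmetric
  rw [starProjection_eq_self_iff.mpr (K.starProjection_apply_mem x)] at hnormK
  exact (hfK.add hnormK).gradient

theorem gradient_extendByHalfNormSq_smul_add {f : E → ℝ} (hf : Differentiable ℝ f) {a : ℝ}
    (ha : a ≠ 0) (hhom : ∀ y, f (a • y) = a ^ 2 * f y) {v : E} (hv : v ∈ K) (x : E) :
    gradient (K.extendByHalfNormSq f) (a • x + v) =
      a • gradient (K.extendByHalfNormSq f) x + v := by
  have hvK : Kᗮ.starProjection v = 0 :=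
    (starProjection_apply_eq_zero_iff _).mpr (K.le_orthogonal_orthogonal hv)
  simp only [gradient_extendByHalfNormSq hf, map_add, map_smul, hvK, add_zero,
    starProjection_eq_self_iff.mpr hv, gradient_smul_of_homogeneous ha hhom hf]
  module

end Submodule

theorem meanProj_eq_starProjection (n : ℕ) (x : EuclideanSpace ℝ (Fin n)) :
    meanProj n x = (ℝ ∙ onesVec n).starProjection x := by
  have hnorm : ‖onesVec n‖ ^ 2 = n := by simp [EuclideanSpace.norm_sq_eq, onesVec]
  have hinner : ⟪onesVec n, x⟫_ℝ = ∑ i, x i := by simp [onesVec, PiLp.inner_apply]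
  rw [Submodule.starProjection_singleton, meanProj, hnorm, hinner, one_div, inv_mul_eq_div]
  rfl

theorem aelpn_gradient_affine_equivariant_general
    (n : ℕ) (h : EuclideanSpace ℝ (Fin n) → ℝ)
    (hdiff : Differentiable ℝ h)
    (hhom : ∀ (x : EuclideanSpace ℝ (Fin n)) (a : ℝ), 0 < a → h (a • x) = a ^ 2 * h x)
    (htilde : EuclideanSpace ℝ (Fin n) → ℝ)
    (htilde_def : ∀ x, htilde x = h (x - meanProj n x) + (1 / 2) * ‖meanProj n x‖ ^ 2) :
    ∀ (x : EuclideanSpace ℝ (Fin n)) (a : ℝ) (c : ℝ), 0 < a →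
      gradient htilde (a • x + c • onesVec n) = a • gradient htilde x + c • onesVec n := by
  intro x a c ha
  have htilde_eq : htilde = (ℝ ∙ onesVec n).extendByHalfNormSq h := by
    ext y
    rw [htilde_def, Submodule.extendByHalfNormSq, meanProj_eq_starProjection,
      Submodule.starProjection_orthogonal_val]
  rw [htilde_eq]
  exact Submodule.gradient_extendByHalfNormSq_smul_add hdiff ha.ne' (hhom · a ha)
    (Submodule.smul_mem _ c (Submodule.mem_span_singleton_self _)) x

/-- equivariance part of the AE-LPN Lemma: if `h` is differentiable and
positively homogeneous of degree two, then the gradient of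
`h̃(x) = h((I−P)x) + (1/2)·‖Px‖²` is scalar-affine equivariant:
`∇h̃(a·x + c·𝟏) = a·∇h̃(x) + c·𝟏`. -/
theorem aelpn_gradient_affine_equivariant
    (n : ℕ) (hn : 1 ≤ n) (h : EuclideanSpace ℝ (Fin n) → ℝ)
    (hdiff : Differentiable ℝ h)
    (hhom : ∀ (x : EuclideanSpace ℝ (Fin n)) (a : ℝ), 0 < a → h (a • x) = a ^ 2 * h x)
    (htilde : EuclideanSpace ℝ (Fin n) → ℝ)
    (htilde_def : ∀ x, htilde x = h (x - meanProj n x) + (1 / 2) * ‖meanProj n x‖ ^ 2) :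
    ∀ (x : EuclideanSpace ℝ (Fin n)) (a : ℝ) (c : ℝ), 0 < a →
      gradient htilde (a • x + c • onesVec n) = a • gradient htilde x + c • onesVec n :=
  aelpn_gradient_affine_equivariant_general n h hdiff hhom htilde htilde_def
end

section
/- Let μ ∈ ℝ and σ₁, σ₂, λ > 0, and define g : ℝ → ℝ by g(x) = (x − μ)²/(2σ₁²) if x < μ and g(x) = (x − μ)²/(2σ₂²) if x ≥ μ (the negative log-density of the split normal distribution 𝒮𝒩(μ, σ₁, σ₂), up to an additive constant). Then for every y ∈ ℝ, the function F(x) = (1/2)(x − y)² + λ·g(x) has a unique global minimizer, equal to (λμ + σ₁²·y)/(λ + σ₁²) if y < μ and (λμ + σ₂²·y)/(λ + σ₂²) if y ≥ μ. In other words, prox_{λg}(y) is given by this piecewise-linear formula. -/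
/-! Each branch `(1/2)(x - y)² + λ(x - μ)²/(2s)` of the objective is a parabola with vertex
`(λμ + s y)/(λ + s)`, a convex combination of `μ` and `y`, so both vertices lie on the same side of
`μ` as `y`. The branch selected by `y` therefore attains its minimum inside its own half-line,
while on the other half-line the other branch increases away from `μ`, where the two branches
agree; comparing through the value at `μ` gives a strict global minimum. -/

theorem forall_le_and_unique_of_forall_lt {α β : Type*} [LinearOrder β] {F : α → β} {q : α}
    (h : ∀ x ≠ q, F q < F x) :
    (∀ x, F q ≤ F x) ∧ ∀ p, (∀ x, F p ≤ F x) → p = q := by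
  refine ⟨fun x => ?_, fun p hp => ?_⟩
  · rcases eq_or_ne x q with rfl | hx
    exacts [le_rfl, (h x hx).le]
  · by_contra hpq
    exact (h p hpq).not_ge (hp q)

section Quadratic

variable (lam μ s y : ℝ)

noncomputable def quadObjective (x : ℝ) : ℝ := 1 / 2 * (x - y) ^ 2 + lam * ((x - μ) ^ 2 / (2 * s))

noncomputable def quadProx : ℝ := (lam * μ + s * y) / (lam + s)

variable {lam μ s y}

theorem quadObjective_eq_quadProx_add (hs : s ≠ 0) (hls : lam + s ≠ 0) (x : ℝ) :
    quadObjective lam μ s y x = quadObjective lam μ s y (quadProx lam μ s y)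
      + (lam + s) / (2 * s) * (x - quadProx lam μ s y) ^ 2 := by
  unfold quadObjective quadProx
  field_simp
  ring

theorem quadObjective_lt_iff (hs : 0 < s) (hlam : 0 ≤ lam) {x x' : ℝ} :
    quadObjective lam μ s y x < quadObjective lam μ s y x' ↔
      (x - quadProx lam μ s y) ^ 2 < (x' - quadProx lam μ s y) ^ 2 := by
  have hls : 0 < lam + s := by linarith
  rw [quadObjective_eq_quadProx_add hs.ne' hls.ne' x,
    quadObjective_eq_quadProx_add hs.ne' hls.ne' x', add_lt_add_iff_left,
    mul_lt_mul_iff_right₀ (by positivity)]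

theorem quadObjective_le_iff (hs : 0 < s) (hlam : 0 ≤ lam) {x x' : ℝ} :
    quadObjective lam μ s y x ≤ quadObjective lam μ s y x' ↔
      (x - quadProx lam μ s y) ^ 2 ≤ (x' - quadProx lam μ s y) ^ 2 := by
  simpa only [not_lt] using (quadObjective_lt_iff hs hlam).not

theorem quadObjective_self : quadObjective lam μ s y μ = 1 / 2 * (μ - y) ^ 2 := by
  simp [quadObjective]

theorem quadProx_sub (hls : lam + s ≠ 0) : quadProx lam μ s y - μ = s / (lam + s) * (y - μ) := by
  unfold quadProx
  field_simp
  ring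

theorem quadProx_lt (hs : 0 < s) (hlam : 0 ≤ lam) (hy : y < μ) : quadProx lam μ s y < μ := by
  have : s / (lam + s) * (y - μ) < 0 :=
    mul_neg_of_pos_of_neg (by positivity) (by linarith)
  linarith [quadProx_sub (μ := μ) (y := y) (by positivity : lam + s ≠ 0)]

theorem le_quadProx (hs : 0 < s) (hlam : 0 ≤ lam) (hy : μ ≤ y) : μ ≤ quadProx lam μ s y := by
  have : 0 ≤ s / (lam + s) * (y - μ) :=
    mul_nonneg (by positivity) (by linarith)
  linarith [quadProx_sub (μ := μ) (y := y) (by positivity : lam + s ≠ 0)]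

end Quadratic

section Split

variable (lam μ s₁ s₂ y : ℝ)

noncomputable def splitObjective (x : ℝ) : ℝ :=
  if x < μ then quadObjective lam μ s₁ y x else quadObjective lam μ s₂ y x

variable {lam μ s₁ s₂ y}

theorem splitObjective_quadProx_lt_of_lt (hs₁ : 0 < s₁) (hs₂ : 0 < s₂) (hlam : 0 ≤ lam)
    (hy : y < μ) {x : ℝ} (hx : x ≠ quadProx lam μ s₁ y) :
    splitObjective lam μ s₁ s₂ y (quadProx lam μ s₁ y) < splitObjective lam μ s₁ s₂ y x := by
  have hq₁ := quadProx_lt hs₁ hlam hy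
  have hq₂ := quadProx_lt (lam := lam) hs₂ hlam hy
  have hx₀ : 0 < (x - quadProx lam μ s₁ y) ^ 2 := by positivity [sub_ne_zero.2 hx]
  unfold splitObjective
  rw [if_pos hq₁]
  split_ifs with hxμ
  · simpa [quadObjective_lt_iff hs₁ hlam] using hx₀
  · calc quadObjective lam μ s₁ y (quadProx lam μ s₁ y)
        < quadObjective lam μ s₁ y μ := by
          rw [quadObjective_lt_iff hs₁ hlam]; nlinarith
      _ = quadObjective lam μ s₂ y μ := by rw [quadObjective_self, quadObjective_self]
      _ ≤ quadObjective lam μ s₂ y x := by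
          rw [quadObjective_le_iff hs₂ hlam]; nlinarith

theorem splitObjective_quadProx_lt_of_le (hs₁ : 0 < s₁) (hs₂ : 0 < s₂) (hlam : 0 ≤ lam)
    (hy : μ ≤ y) {x : ℝ} (hx : x ≠ quadProx lam μ s₂ y) :
    splitObjective lam μ s₁ s₂ y (quadProx lam μ s₂ y) < splitObjective lam μ s₁ s₂ y x := by
  have hq₁ := le_quadProx (lam := lam) hs₁ hlam hy
  have hq₂ := le_quadProx hs₂ hlam hy
  have hx₀ : 0 < (x - quadProx lam μ s₂ y) ^ 2 := by positivity [sub_ne_zero.2 hx]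
  unfold splitObjective
  rw [if_neg hq₂.not_gt]
  split_ifs with hxμ
  · calc quadObjective lam μ s₂ y (quadProx lam μ s₂ y)
        ≤ quadObjective lam μ s₂ y μ := by
          rw [quadObjective_le_iff hs₂ hlam, sub_self, zero_pow two_ne_zero]; positivity
      _ = quadObjective lam μ s₁ y μ := by rw [quadObjective_self, quadObjective_self]
      _ < quadObjective lam μ s₁ y x := by
          rw [quadObjective_lt_iff hs₁ hlam]; nlinarith
  · simpa [quadObjective_lt_iff hs₂ hlam] using hx₀

end Split

/-- the proximal operator of `λ·g`, where `g` is the negative log-density of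
the split normal distribution `𝒮𝒩(μ, σ₁, σ₂)`, is the stated piecewise-linear map: for
every `y`, `F(x) = (1/2)(x−y)² + λ·g(x)` has a unique global minimizer, equal to
`(λμ + σ₁²y)/(λ + σ₁²)` if `y < μ` and `(λμ + σ₂²y)/(λ + σ₂²)` if `y ≥ μ`. -/
theorem split_normal_prox
    (μ σ₁ σ₂ lam : ℝ) (hσ₁ : 0 < σ₁) (hσ₂ : 0 < σ₂) (hlam : 0 < lam)
    (g : ℝ → ℝ)
    (hg : ∀ x, g x = if x < μ then (x - μ) ^ 2 / (2 * σ₁ ^ 2) else (x - μ) ^ 2 / (2 * σ₂ ^ 2)) :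
    ∀ y : ℝ,
      (∀ x : ℝ,
        (1 / 2) * ((if y < μ then (lam * μ + σ₁ ^ 2 * y) / (lam + σ₁ ^ 2)
            else (lam * μ + σ₂ ^ 2 * y) / (lam + σ₂ ^ 2)) - y) ^ 2
          + lam * g (if y < μ then (lam * μ + σ₁ ^ 2 * y) / (lam + σ₁ ^ 2)
            else (lam * μ + σ₂ ^ 2 * y) / (lam + σ₂ ^ 2)) ≤
        (1 / 2) * (x - y) ^ 2 + lam * g x) ∧
      (∀ p : ℝ,
        (∀ x : ℝ, (1 / 2) * (p - y) ^ 2 + lam * g p ≤ (1 / 2) * (x - y) ^ 2 + lam * g x) →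
        p = (if y < μ then (lam * μ + σ₁ ^ 2 * y) / (lam + σ₁ ^ 2)
            else (lam * μ + σ₂ ^ 2 * y) / (lam + σ₂ ^ 2))) := by
  intro y
  have hobj : ∀ x, 1 / 2 * (x - y) ^ 2 + lam * g x
      = splitObjective lam μ (σ₁ ^ 2) (σ₂ ^ 2) y x := by
    intro x
    rw [hg, splitObjective]
    split_ifs <;> rfl
  simp only [hobj]
  apply forall_le_and_unique_of_forall_lt
  split_ifs with hy
  · exact fun x hx => splitObjective_quadProx_lt_of_lt (by positivity) (by positivity)
      hlam.le hy hx
  · exact fun x hx => splitObjective_quadProx_lt_of_le (by positivity) (by positivity)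
      hlam.le (not_lt.1 hy) hx
end
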